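/- arXiv:2003.04214 — 6 statements merged into one kernel-verified Lean document; each statement's English description precedes it below -/
import Mathlib

section
/- For nonincreasing sequences (A_n) and (B_n) of nonempty compact subsets of the real line, the difference set of the intersections equals the intersection of the difference sets: (⋂_n A_n) - (⋂_n B_n) = ⋂_n (A_n - B_n). -/
open Set Pointwise

/-- For nonincreasing sequences of nonempty compact subsets of ℝ, the (pointwise) difference
set of the intersections equals the intersection of the difference sets. -/
theorem inter_sub_inter_of_antitone_compact (A B : ℕ → Set ℝ)
    (hAc : ∀ n, IsCompact (A n)) (hBc : ∀ n, IsCompact (B n))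
    (hAne : ∀ n, (A n).Nonempty) (hBne : ∀ n, (B n).Nonempty)
    (hA : ∀ n, A (n + 1) ⊆ A n) (hB : ∀ n, B (n + 1) ⊆ B n) :
    (⋂ n, A n) - (⋂ n, B n) = ⋂ n, (A n - B n) := by
  apply Set.Subset.antisymm
  · intro x hx
    rw [Set.mem_sub] at hx
    obtain ⟨a, ha, b, hb, hab⟩ := hx
    simp only [Set.mem_iInter] at ha hb ⊢
    exact fun n => ⟨a, ha n, b, hb n, hab⟩
  · intro x hx
    simp only [Set.mem_iInter, Set.mem_sub] at hx
    set C : ℕ → Set (ℝ × ℝ) := fun n => (A n ×ˢ B n) ∩ {p : ℝ × ℝ | p.1 - p.2 = x}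
      with hC
    have hclosed : IsClosed {p : ℝ × ℝ | p.1 - p.2 = x} :=
      isClosed_eq (by fun_prop) continuous_const
    have hCc : ∀ n, IsCompact (C n) := fun n =>
      ((hAc n).prod (hBc n)).inter_right hclosed
    have hCcl : ∀ n, IsClosed (C n) := fun n => (hCc n).isClosed
    have hCne : ∀ n, (C n).Nonempty := by
      intro n
      obtain ⟨a, ha, b, hb, hab⟩ := hx n
      exact ⟨(a, b), ⟨⟨ha, hb⟩, hab⟩⟩
    have hCmono : ∀ n, C (n + 1) ⊆ C n := fun n p hp =>
      ⟨⟨hA n hp.1.1, hB n hp.1.2⟩, hp.2⟩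
    obtain ⟨⟨a, b⟩, hab⟩ := IsCompact.nonempty_iInter_of_sequence_nonempty_isCompact_isClosed
      C hCmono hCne (hCc 0) hCcl
    simp only [Set.mem_iInter, hC, Set.mem_inter_iff, Set.mem_prod] at hab
    exact ⟨a, Set.mem_iInter.2 fun n => (hab n).1.1, b,
      Set.mem_iInter.2 fun n => (hab n).1.2, (hab 0).2⟩
end

section
/- For any sequence λ ∈ (0, 1/2)^ℕ and any n, the difference set C_n(λ) - C_n(λ) equals the union over all t ∈ {0,1,2}^n of the intervals J_t, where J_t = I_p - I_q for any p, q ∈ {0,1}^n with t_i = p_i - q_i + 1 for all i. -/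
open Set Pointwise Filter MeasureTheory

noncomputable section

/-- `dseq lam n = λ₁ ⋯ λₙ` (with `lam i` the `i`-th term, `1`-indexed); `dseq lam 0 = 1`. -/
def dseq (lam : ℕ → ℝ) (n : ℕ) : ℝ := ∏ i ∈ Finset.Icc 1 n, lam i

/-- Left endpoint of the interval `I_p` of the central Cantor construction. -/
def leftI (lam : ℕ → ℝ) (p : List Bool) : ℝ :=
  ∑ i : Fin p.length, if p.get i then dseq lam (i : ℕ) - dseq lam ((i : ℕ) + 1) else 0

/-- The closed interval `I_p` of the central Cantor construction. -/
def Iset (lam : ℕ → ℝ) (p : List Bool) : Set ℝ :=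
  Icc (leftI lam p) (leftI lam p + dseq lam p.length)

/-- The `n`-th stage `C_n(λ)` of the central Cantor construction. -/
def CnSet (lam : ℕ → ℝ) (n : ℕ) : Set ℝ :=
  ⋃ p ∈ {p : List Bool | p.length = n}, Iset lam p

/-- The central Cantor set `C(λ)`. -/
def CSet (lam : ℕ → ℝ) : Set ℝ := ⋂ n, CnSet lam n

/-- `J_t = I_p - I_q` where `t i = p i - q i + 1` (pointwise set difference). -/
def Jset (lam : ℕ → ℝ) (t : List (Fin 3)) : Set ℝ :=
  Iset lam (t.map fun a => decide (a = 2)) - Iset lam (t.map fun a => decide (a = 0))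

lemma dseq_pos {lam : ℕ → ℝ} (hlam : ∀ n, 1 ≤ n → lam n ∈ Ioo (0 : ℝ) (1 / 2)) (n : ℕ) :
    0 < dseq lam n :=
  Finset.prod_pos fun i hi => (hlam i (Finset.mem_Icc.mp hi).1).1

lemma leftI_eq (lam : ℕ → ℝ) (p : List Bool) :
    leftI lam p = ∑ i ∈ Finset.range p.length,
      (if p.getD i false then dseq lam i - dseq lam (i + 1) else 0) := by
  rw [leftI, ← Fin.sum_univ_eq_sum_range]
  refine Finset.sum_congr rfl fun i _ => ?_
  congr 1
  rw [List.getD_eq_getElem _ _ i.isLt]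
  rfl

/-- `I_p - I_q` as a closed interval. -/
lemma Iset_sub_Iset {lam : ℕ → ℝ} (hlam : ∀ n, 1 ≤ n → lam n ∈ Ioo (0 : ℝ) (1 / 2))
    (p q : List Bool) :
    Iset lam p - Iset lam q =
      Icc (leftI lam p - (leftI lam q + dseq lam q.length))
        (leftI lam p + dseq lam p.length - leftI lam q) := by
  have hp : leftI lam p ≤ leftI lam p + dseq lam p.length := by
    linarith [dseq_pos hlam p.length]
  have hq : leftI lam q ≤ leftI lam q + dseq lam q.length := by
    linarith [dseq_pos hlam q.length]
  rw [Iset, Iset, sub_eq_add_neg, Set.neg_Icc, Icc_add_Icc hp (by linarith)]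
  congr 1

def tOf (p q : List Bool) : List (Fin 3) :=
  List.zipWith (fun a b => if a then (if b then 1 else 2) else (if b then 0 else 1)) p q

lemma tOf_length (p q : List Bool) (h : p.length = q.length) : (tOf p q).length = p.length := by
  simp [tOf, h]

lemma leftI_tOf (lam : ℕ → ℝ) (p q : List Bool) (h : p.length = q.length) :
    leftI lam ((tOf p q).map fun a => decide (a = 2)) -
      leftI lam ((tOf p q).map fun a => decide (a = 0)) = leftI lam p - leftI lam q := by
  have hl := tOf_length p q h
  rw [leftI_eq, leftI_eq, leftI_eq, leftI_eq, List.length_map, List.length_map, hl, h,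
    ← Finset.sum_sub_distrib, ← Finset.sum_sub_distrib]
  rw [show p.length = q.length from h] at hl
  refine Finset.sum_congr rfl fun i hi => ?_
  have hiq : i < q.length := Finset.mem_range.mp hi
  have hip : i < p.length := h ▸ hiq
  have hit : i < (tOf p q).length := hl ▸ hiq
  rw [List.getD_eq_getElem _ _ hip, List.getD_eq_getElem _ _ hiq,
    List.getD_eq_getElem _ _ (by simpa using hit), List.getD_eq_getElem _ _ (by simpa using hit)]
  simp only [List.getElem_map]
  have : (tOf p q)[i] = if p[i] then (if q[i] then 1 else 2) else (if q[i] then 0 else 1) := by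
    simp [tOf, List.getElem_zipWith]
  rw [this]
  rcases hb : p[i] <;> rcases hb' : q[i] <;> simp [Fin.ext_iff]

/-- `C_n(λ) - C_n(λ)` is the union of the intervals `J_t`, `t ∈ {0,1,2}ⁿ`. -/
theorem CnSet_sub_CnSet (lam : ℕ → ℝ) (hlam : ∀ n, 1 ≤ n → lam n ∈ Ioo (0 : ℝ) (1 / 2))
    (n : ℕ) :
    CnSet lam n - CnSet lam n = ⋃ t ∈ {t : List (Fin 3) | t.length = n}, Jset lam t := by
  ext x
  simp only [CnSet, Set.mem_sub, mem_iUnion, mem_setOf_eq, exists_prop]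
  constructor
  · rintro ⟨a, ha, b, hb, rfl⟩
    obtain ⟨p, hp, hap⟩ := ha
    obtain ⟨q, hq, hbq⟩ := hb
    have hpq : p.length = q.length := hp.trans hq.symm
    refine ⟨tOf p q, by rw [tOf_length p q hpq, hp], ?_⟩
    have key : Jset lam (tOf p q) = Iset lam p - Iset lam q := by
      rw [Jset, Iset_sub_Iset hlam, Iset_sub_Iset hlam]
      have h2 : ((tOf p q).map fun a => decide (a = 2)).length = p.length := by
        rw [List.length_map, tOf_length p q hpq]
      have h0 : ((tOf p q).map fun a => decide (a = 0)).length = q.length := by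
        rw [List.length_map, tOf_length p q hpq, hpq]
      have hL := leftI_tOf lam p q hpq
      rw [h2, h0]
      have e1 : leftI lam ((tOf p q).map fun a => decide (a = 2)) -
          (leftI lam ((tOf p q).map fun a => decide (a = 0)) + dseq lam q.length) =
          leftI lam p - (leftI lam q + dseq lam q.length) := by linarith
      have e2 : leftI lam ((tOf p q).map fun a => decide (a = 2)) + dseq lam p.length -
          leftI lam ((tOf p q).map fun a => decide (a = 0)) =
          leftI lam p + dseq lam p.length - leftI lam q := by linarith
      rw [e1, e2]
    rw [key]
    exact ⟨a, hap, b, hbq, rfl⟩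

  · rintro ⟨t, ht, hx⟩
    rw [Jset, Set.mem_sub] at hx
    obtain ⟨a, ha, b, hb, rfl⟩ := hx
    refine ⟨a, ?_, b, ?_, rfl⟩
    · exact ⟨_, by simp [ht], ha⟩
    · exact ⟨_, by simp [ht], hb⟩
end
end

section
/- For λ ∈ (0,1/2)^ℕ, C(λ) - C(λ) = [-1, 1] if and only if λ_n ≥ 1/3 for all n. -/
open Set Pointwise Filter MeasureTheory

noncomputable section

namespace CantorAux

variable {lam : ℕ → ℝ}

lemma dseq_zero : dseq lam 0 = 1 := by simp [dseq]

lemma dseq_succ (n : ℕ) : dseq lam (n + 1) = dseq lam n * lam (n + 1) := by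
  simp [dseq, Finset.prod_Icc_succ_top (Nat.le_add_left 1 n)]

section hlam
variable (hlam : ∀ n, 1 ≤ n → lam n ∈ Ioo (0 : ℝ) (1 / 2))
include hlam

lemma dseq_pos (n : ℕ) : 0 < dseq lam n := by
  induction n with
  | zero => rw [dseq_zero]; norm_num
  | succ k ih =>
      rw [dseq_succ]
      exact mul_pos ih (hlam (k + 1) (Nat.le_add_left 1 k)).1

lemma two_dseq_lt (n : ℕ) : 2 * dseq lam (n + 1) < dseq lam n := by
  have h := (hlam (n + 1) (Nat.le_add_left 1 n)).2
  have hd := dseq_pos hlam n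
  rw [dseq_succ]
  nlinarith

lemma dseq_succ_lt (n : ℕ) : dseq lam (n + 1) < dseq lam n := by
  have := two_dseq_lt hlam n
  have := dseq_pos hlam (n + 1)
  linarith

lemma dseq_antitone : Antitone (dseq lam) :=
  antitone_nat_of_succ_le fun n => (dseq_succ_lt hlam n).le

lemma dseq_le_one (n : ℕ) : dseq lam n ≤ 1 := by
  have := dseq_antitone hlam (Nat.zero_le n)
  rwa [dseq_zero] at this

lemma gap_pos (n : ℕ) : 0 < dseq lam n - dseq lam (n + 1) :=
  sub_pos.mpr (dseq_succ_lt hlam n)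

end hlam

lemma leftI_eq (p : List Bool) : leftI lam p =
    ∑ i ∈ Finset.range p.length,
      (if p.getD i false then dseq lam i - dseq lam (i + 1) else 0) := by
  rw [leftI, ← Fin.sum_univ_eq_sum_range]
  apply Finset.sum_congr rfl
  intro i _
  have : p.get i = p.getD (i : ℕ) false := by
    rw [List.get_eq_getElem, List.getD_eq_getElem _ _ i.isLt]
  rw [this]

lemma leftI_nil : leftI lam ([] : List Bool) = 0 := by simp [leftI]

lemma leftI_append (p : List Bool) (b : Bool) :
    leftI lam (p ++ [b]) = leftI lam p +
      if b then dseq lam p.length - dseq lam (p.length + 1) else 0 := by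
  rw [leftI_eq, leftI_eq]
  have hlen : (p ++ [b]).length = p.length + 1 := by simp
  rw [hlen, Finset.sum_range_succ]
  have h1 : ∀ i ∈ Finset.range p.length,
      (if (p ++ [b]).getD i false then dseq lam i - dseq lam (i + 1) else 0)
        = (if p.getD i false then dseq lam i - dseq lam (i + 1) else 0) := by
    intro i hi
    rw [List.getD_append _ _ _ _ (Finset.mem_range.mp hi)]
  rw [Finset.sum_congr rfl h1]
  have h2 : (p ++ [b]).getD p.length false = b := by
    simp
  rw [h2]


lemma sum_gap (n : ℕ) :
    ∑ i ∈ Finset.range n, (dseq lam i - dseq lam (i + 1)) = 1 - dseq lam n := by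
  rw [Finset.sum_range_sub' (dseq lam) n, dseq_zero]

section hlam2
variable (hlam : ∀ n, 1 ≤ n → lam n ∈ Ioo (0 : ℝ) (1 / 2))
include hlam

lemma leftI_nonneg (p : List Bool) : 0 ≤ leftI lam p := by
  rw [leftI_eq]
  apply Finset.sum_nonneg
  intro i _
  split
  · exact (gap_pos hlam i).le
  · exact le_refl 0

lemma leftI_le (p : List Bool) : leftI lam p ≤ 1 - dseq lam p.length := by
  rw [leftI_eq, ← sum_gap (lam := lam) p.length]
  apply Finset.sum_le_sum
  intro i _
  split
  · exact le_refl _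
  · exact (gap_pos hlam i).le

end hlam2

lemma mem_CnSet {x : ℝ} {n : ℕ} :
    x ∈ CnSet lam n ↔ ∃ p : List Bool, p.length = n ∧ x ∈ Iset lam p := by
  simp [CnSet]

section hlam3
variable (hlam : ∀ n, 1 ≤ n → lam n ∈ Ioo (0 : ℝ) (1 / 2))
include hlam

lemma Iset_append_subset (p : List Bool) (b : Bool) :
    Iset lam (p ++ [b]) ⊆ Iset lam p := by
  have hg := gap_pos hlam p.length
  have hlt := dseq_succ_lt hlam p.length
  rw [Iset, Iset, leftI_append]
  have hlen : (p ++ [b]).length = p.length + 1 := by simp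
  rw [hlen]
  apply Icc_subset_Icc
  · split <;> linarith
  · split <;> linarith

lemma CnSet_succ_subset (n : ℕ) : CnSet lam (n + 1) ⊆ CnSet lam n := by
  intro x hx
  obtain ⟨p, hp, hxp⟩ := mem_CnSet.mp hx
  have hne : p ≠ [] := by intro h; rw [h] at hp; simp at hp
  have hsplit : p.dropLast ++ [p.getLast hne] = p := List.dropLast_append_getLast hne
  rw [mem_CnSet]
  refine ⟨p.dropLast, ?_, ?_⟩
  · rw [List.length_dropLast, hp]; rfl
  · apply Iset_append_subset hlam
    rw [hsplit]; exact hxp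

lemma CnSet_anti {m n : ℕ} (h : m ≤ n) : CnSet lam n ⊆ CnSet lam m := by
  induction n with
  | zero => simp_all
  | succ k ih =>
      rcases Nat.lt_or_ge m (k + 1) with h' | h'
      · exact (CnSet_succ_subset hlam k).trans (ih (Nat.lt_succ_iff.mp h'))
      · have : m = k + 1 := le_antisymm h h'
        subst this; rfl

omit hlam in
lemma CSet_subset_CnSet (n : ℕ) : CSet lam ⊆ CnSet lam n := iInter_subset _ n

end hlam3

lemma isCompact_CnSet (n : ℕ) : IsCompact (CnSet lam n) := by
  apply Set.Finite.isCompact_biUnion (List.finite_length_eq _ n)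
  intro p _
  exact isCompact_Icc

lemma isClosed_CnSet (n : ℕ) : IsClosed (CnSet lam n) := by
  apply Set.Finite.isClosed_biUnion (List.finite_length_eq _ n)
  intro p _
  exact isClosed_Icc


section main
variable (hlam : ∀ n, 1 ≤ n → lam n ∈ Ioo (0 : ℝ) (1 / 2))
include hlam

lemma cover (h3 : ∀ n, 1 ≤ n → (1 : ℝ) / 3 ≤ lam n) (x : ℝ) (hx : |x| ≤ 1) (n : ℕ) :
    ∃ p q : List Bool, p.length = n ∧ q.length = n ∧
      |x - (leftI lam p - leftI lam q)| ≤ dseq lam n := by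
  induction n with
  | zero => exact ⟨[], [], rfl, rfl, by simpa [leftI_nil, dseq_zero] using hx⟩
  | succ k ih =>
      obtain ⟨p, q, hp, hq, hc⟩ := ih
      have hd3 : dseq lam k ≤ 3 * dseq lam (k + 1) := by
        have h1 := h3 (k + 1) (Nat.le_add_left 1 k)
        have h2 := dseq_pos hlam k
        rw [dseq_succ]; nlinarith
      have hlt := dseq_succ_lt hlam k
      have hpos := dseq_pos hlam (k + 1)
      rw [abs_le] at hc
      rcases le_or_gt (x - (leftI lam p - leftI lam q)) (dseq lam (k + 1)) with ha | ha
      · rcases le_or_gt (-(dseq lam (k + 1))) (x - (leftI lam p - leftI lam q)) with hb | hb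
        · refine ⟨p ++ [false], q ++ [false], by simp [hp], by simp [hq], ?_⟩
          rw [leftI_append, leftI_append, abs_le]
          constructor <;> simp <;> linarith
        · refine ⟨p ++ [false], q ++ [true], by simp [hp], by simp [hq], ?_⟩
          rw [leftI_append, leftI_append, abs_le]
          rw [hq]
          constructor <;> simp <;> linarith
      · refine ⟨p ++ [true], q ++ [false], by simp [hp], by simp [hq], ?_⟩
        rw [leftI_append, leftI_append, abs_le]
        rw [hp]
        constructor <;> simp <;> linarith

lemma stage_nonempty (h3 : ∀ n, 1 ≤ n → (1 : ℝ) / 3 ≤ lam n) (x : ℝ) (hx : |x| ≤ 1)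
    (n : ℕ) : ∃ a, a ∈ CnSet lam n ∧ a - x ∈ CnSet lam n := by
  obtain ⟨p, q, hp, hq, hc⟩ := cover hlam h3 x hx n
  have hdn : 0 < dseq lam n := dseq_pos hlam n
  rw [abs_le] at hc
  refine ⟨leftI lam p + max (x - (leftI lam p - leftI lam q)) 0, ?_, ?_⟩
  · rw [mem_CnSet]
    refine ⟨p, hp, le_add_of_nonneg_right (le_max_right _ _), ?_⟩
    rw [hp]
    have : max (x - (leftI lam p - leftI lam q)) 0 ≤ dseq lam n :=
      max_le hc.2 hdn.le
    linarith
  · have heq : leftI lam p + max (x - (leftI lam p - leftI lam q)) 0 - x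
        = leftI lam q + max ((leftI lam p - leftI lam q) - x) 0 := by
      rcases le_total x (leftI lam p - leftI lam q) with h | h
      · rw [max_eq_right (by linarith), max_eq_left (by linarith)]; ring
      · rw [max_eq_left (by linarith), max_eq_right (by linarith)]; ring
    rw [heq, mem_CnSet]
    refine ⟨q, hq, le_add_of_nonneg_right (le_max_right _ _), ?_⟩
    rw [hq]
    have : max ((leftI lam p - leftI lam q) - x) 0 ≤ dseq lam n :=
      max_le (by linarith) hdn.le
    linarith

end main


lemma leftI_full {p : List Bool} {n : ℕ} (hp : p.length = n)
    (hall : ∀ i, i < n → p.getD i false = true) :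
    leftI lam p = 1 - dseq lam n := by
  rw [leftI_eq, hp, ← sum_gap (lam := lam) n]
  apply Finset.sum_congr rfl
  intro i hi
  rw [hall i (Finset.mem_range.mp hi)]
  simp

lemma leftI_zero {q : List Bool} {n : ℕ} (hq : q.length = n)
    (hall : ∀ i, i < n → q.getD i false = false) :
    leftI lam q = 0 := by
  rw [leftI_eq, hq]
  apply Finset.sum_eq_zero
  intro i hi
  rw [hall i (Finset.mem_range.mp hi)]
  simp

lemma leftI_diff_le (hlam : ∀ n, 1 ≤ n → lam n ∈ Ioo (0 : ℝ) (1 / 2))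
    {p q : List Bool} {n i : ℕ} (hp : p.length = n) (hq : q.length = n)
    (hi : i < n) (hw : p.getD i false = false ∨ q.getD i false = true) :
    leftI lam p - leftI lam q ≤ (1 - dseq lam n) - (dseq lam i - dseq lam (i + 1)) := by
  have hgap : ∀ j : ℕ, 0 < dseq lam j - dseq lam (j + 1) := gap_pos hlam
  rw [leftI_eq, leftI_eq, hp, hq, ← Finset.sum_sub_distrib]
  have hi' : i ∈ Finset.range n := Finset.mem_range.mpr hi
  have key : ∀ j ∈ Finset.range n,
      ((if p.getD j false then dseq lam j - dseq lam (j + 1) else 0)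
        - (if q.getD j false then dseq lam j - dseq lam (j + 1) else 0))
      ≤ (if j = i then 0 else dseq lam j - dseq lam (j + 1)) := by
    intro j _
    by_cases hji : j = i
    · subst hji
      have hz : (if j = j then (0 : ℝ) else dseq lam j - dseq lam (j + 1)) = 0 := by simp
      rw [hz]
      rcases hw with hw | hw
      · rw [hw]
        simp only [Bool.false_eq_true, if_false]
        split
        · linarith [hgap j]
        · linarith
      · rw [hw, if_pos rfl]
        split
        · linarith
        · linarith [hgap j]
    · rw [if_neg hji]
      split <;> split <;> linarith [hgap j]
  refine le_trans (Finset.sum_le_sum key) ?_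
  rw [← Finset.add_sum_erase _ _ hi', if_pos rfl, zero_add]
  have h1 : ∑ j ∈ (Finset.range n).erase i,
      (if j = i then 0 else dseq lam j - dseq lam (j + 1))
      = ∑ j ∈ (Finset.range n).erase i, (dseq lam j - dseq lam (j + 1)) := by
    apply Finset.sum_congr rfl
    intro j hj
    rw [if_neg (Finset.ne_of_mem_erase hj)]
  rw [h1]
  have h2 : ∑ j ∈ Finset.range n, (dseq lam j - dseq lam (j + 1))
      = (dseq lam i - dseq lam (i + 1)) + ∑ j ∈ (Finset.range n).erase i,
        (dseq lam j - dseq lam (j + 1)) := (Finset.add_sum_erase _ _ hi').symm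
  rw [sum_gap] at h2
  linarith

lemma CSet_subset_unit : CSet lam ⊆ Icc (0 : ℝ) 1 := by
  intro x hx
  have h0 : x ∈ CnSet lam 0 := by
    have := Set.mem_iInter.mp hx 0
    exact this
  obtain ⟨p, hp, hxp⟩ := mem_CnSet.mp h0
  have : p = [] := List.length_eq_zero_iff.mp hp
  subst this
  rw [Iset, leftI_nil, List.length_nil, dseq_zero] at hxp
  simpa using hxp

end CantorAux

/-- `C(λ) - C(λ) = [-1, 1]` if and only if `λₙ ≥ 1/3` for all `n`. -/
theorem CSet_sub_CSet_eq_Icc_iff (lam : ℕ → ℝ)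
    (hlam : ∀ n, 1 ≤ n → lam n ∈ Ioo (0 : ℝ) (1 / 2)) :
    CSet lam - CSet lam = Icc (-1 : ℝ) 1 ↔ ∀ n, 1 ≤ n → (1 : ℝ) / 3 ≤ lam n := by
  constructor
  · intro heq
    by_contra hcon
    push_neg at hcon
    obtain ⟨n, hn1, hn3⟩ := hcon
    obtain ⟨m, rfl⟩ : ∃ m, n = m + 1 := ⟨n - 1, (Nat.succ_pred_eq_of_pos hn1).symm⟩
    have hDpos : 0 < dseq lam m := CantorAux.dseq_pos hlam m
    have hEpos : 0 < dseq lam (m + 1) := CantorAux.dseq_pos hlam (m + 1)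
    have hD1 : dseq lam m ≤ 1 := CantorAux.dseq_le_one hlam m
    have h3E : 3 * dseq lam (m + 1) < dseq lam m := by
      rw [CantorAux.dseq_succ]; nlinarith
    set D := dseq lam m with hD
    set E := dseq lam (m + 1) with hE
    set x := 1 - (D + E) / 2 with hx
    have hxmem : x ∈ Icc (-1 : ℝ) 1 := by
      constructor
      · simp only [hx]; linarith
      · simp only [hx]; linarith
    rw [← heq] at hxmem
    obtain ⟨a, ha, b, hb, hab⟩ := Set.mem_sub.mp hxmem
    have haC := CantorAux.CSet_subset_CnSet (lam := lam) (m + 1) ha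
    have hbC := CantorAux.CSet_subset_CnSet (lam := lam) (m + 1) hb
    obtain ⟨p, hp, hap⟩ := CantorAux.mem_CnSet.mp haC
    obtain ⟨q, hq, hbq⟩ := CantorAux.mem_CnSet.mp hbC
    rw [Iset, hp] at hap
    rw [Iset, hq] at hbq
    obtain ⟨hap1, hap2⟩ := hap
    obtain ⟨hbq1, hbq2⟩ := hbq
    have hc1 : x - (leftI lam p - leftI lam q) ≤ E := by
      rw [← hab]; linarith
    have hc2 : -E ≤ x - (leftI lam p - leftI lam q) := by
      rw [← hab]; linarith
    by_cases hall : ∀ i, i < m + 1 → p.getD i false = true ∧ q.getD i false = false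
    · have h1 := CantorAux.leftI_full (lam := lam) hp (fun i hi => (hall i hi).1)
      have h2 := CantorAux.leftI_zero (lam := lam) hq (fun i hi => (hall i hi).2)
      rw [h1, h2] at hc2
      simp only [hx, ← hE] at hc2
      linarith
    · push_neg at hall
      obtain ⟨i, hi, himp⟩ := hall
      have hw : p.getD i false = false ∨ q.getD i false = true := by
        rcases Bool.eq_false_or_eq_true (p.getD i false) with h | h
        · rcases Bool.eq_false_or_eq_true (q.getD i false) with h' | h'
          · exact Or.inr h'
          · exact absurd h' (himp h)
        · exact Or.inl h
      have hdiff := CantorAux.leftI_diff_le hlam hp hq hi hw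
      have hgapbig : (D + E) / 2 < dseq lam i - dseq lam (i + 1) := by
        rcases Nat.lt_or_ge i m with him | him
        · have h1 : 2 * dseq lam (i + 1) < dseq lam i := CantorAux.two_dseq_lt hlam i
          have h2 : D ≤ dseq lam (i + 1) := CantorAux.dseq_antitone hlam (by omega)
          linarith
        · have : i = m := by omega
          subst this
          simp only [← hD, ← hE]
          linarith
      rw [← hE] at hdiff
      simp only [hx] at hc1
      linarith
  · intro h3
    apply Set.Subset.antisymm
    · intro y hy
      obtain ⟨a, ha, b, hb, hab⟩ := Set.mem_sub.mp hy
      have ha' := CantorAux.CSet_subset_unit (lam := lam) ha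
      have hb' := CantorAux.CSet_subset_unit (lam := lam) hb
      rw [← hab]
      obtain ⟨ha1, ha2⟩ := ha'
      obtain ⟨hb1, hb2⟩ := hb'
      constructor <;> simp <;> linarith
    · intro x hx
      have hxabs : |x| ≤ 1 := abs_le.mpr ⟨hx.1, hx.2⟩
      set K : ℕ → Set ℝ := fun n => CnSet lam n ∩ {y | y - x ∈ CnSet lam n} with hK
      have hclosed : ∀ n, IsClosed (K n) := fun n =>
        (CantorAux.isClosed_CnSet n).inter
          ((CantorAux.isClosed_CnSet (lam := lam) n).preimage (continuous_sub_right x))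
      have hsub : ∀ n, K (n + 1) ⊆ K n := fun n =>
        Set.inter_subset_inter (CantorAux.CnSet_succ_subset hlam n)
          (fun y hy => CantorAux.CnSet_succ_subset hlam n hy)
      have hne : ∀ n, (K n).Nonempty := by
        intro n
        obtain ⟨a, h1, h2⟩ := CantorAux.stage_nonempty hlam h3 x hxabs n
        exact ⟨a, h1, h2⟩
      have hcompact : IsCompact (K 0) :=
        (CantorAux.isCompact_CnSet 0).inter_right
          ((CantorAux.isClosed_CnSet (lam := lam) 0).preimage (continuous_sub_right x))
      obtain ⟨a, haK⟩ :=
        IsCompact.nonempty_iInter_of_sequence_nonempty_isCompact_isClosed K hsub hne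
          hcompact hclosed
      have ha : a ∈ CSet lam := Set.mem_iInter.mpr fun n => (Set.mem_iInter.mp haK n).1
      have hb : a - x ∈ CSet lam := Set.mem_iInter.mpr fun n => (Set.mem_iInter.mp haK n).2
      exact Set.mem_sub.mpr ⟨a, ha, a - x, hb, by ring⟩
end
end

section
/- For λ ∈ (0,1/2)^ℕ, the difference set C(λ) - C(λ) is a finite union of closed intervals if and only if the set {n ∈ ℕ : λ_n < 1/3} is finite. -/
/-!
Write `c_m = d_m - d_{m+1}`. If `λ_{m+1} < 1/3`, then `(1 - c_m, 1 - 2 d_{m+1})` is a nonempty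
gap of `C(λ) - C(λ)` whose left end `1 - c_m` belongs to `C(λ) - C(λ)`; these ends are pairwise
distinct boundary points, while a finite union of closed intervals has finitely many.
Conversely, by compactness `C(λ) - C(λ) = ⋂ₙ (Cₙ - Cₙ)`, and `Cₙ - Cₙ` is the union of the
intervals `I_p - I_q`. When `λ_{n+1} ≥ 1/3` the level-`(n+1)` intervals inside each `I_p - I_q`
overlap and cover it, so the intersection stabilises at a finite union of intervals.
-/

open Set Pointwise Filter MeasureTheory

noncomputable section

section Topology

lemma Set.Finite.frontier_biUnion_subset {X ι : Type*} [TopologicalSpace X] {s : Set ι}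
    (hs : s.Finite) (f : ι → Set X) :
    frontier (⋃ i ∈ s, f i) ⊆ ⋃ i ∈ s, frontier (f i) := by
  rintro x ⟨hcl, hint⟩
  rw [hs.closure_biUnion] at hcl
  obtain ⟨i, hi, hxi⟩ := mem_iUnion₂.1 hcl
  exact mem_iUnion₂.2 ⟨i, hi, hxi, fun h => hint (interior_mono (subset_biUnion_of_mem hi) h)⟩

variable {α : Type*} [TopologicalSpace α] [LinearOrder α]

lemma frontier_Icc_subset_pair [OrderClosedTopology α] (a b : α) :
    frontier (Icc a b) ⊆ {a, b} := by
  rintro x ⟨hcl, hint⟩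
  rw [closure_Icc] at hcl
  by_contra hab
  simp only [mem_insert_iff, mem_singleton_iff, not_or] at hab
  exact hint (interior_maximal Ioo_subset_Icc_self isOpen_Ioo
    ⟨lt_of_le_of_ne hcl.1 (Ne.symm hab.1), lt_of_le_of_ne hcl.2 hab.2⟩)

lemma finite_frontier_biUnion_Icc [OrderClosedTopology α] (F : Finset (α × α)) :
    (frontier (⋃ p ∈ F, Icc p.1 p.2)).Finite := by
  refine (F.finite_toSet.biUnion fun p _ => toFinite ({p.1, p.2} : Set α)).subset ?_
  exact (F.finite_toSet.frontier_biUnion_subset _).trans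
    (biUnion_mono subset_rfl fun p _ => frontier_Icc_subset_pair p.1 p.2)

lemma mem_frontier_of_disjoint_Ioo [OrderTopology α] [DenselyOrdered α] {s : Set α} {x y : α}
    (hx : x ∈ s) (hxy : x < y) (hgap : Disjoint (Ioo x y) s) : x ∈ frontier s := by
  refine ⟨subset_closure hx, fun hint => ?_⟩
  obtain ⟨u, hxu, hIco⟩ :=
    exists_Ico_subset_of_mem_nhds (mem_interior_iff_mem_nhds.1 hint) ⟨y, hxy⟩
  obtain ⟨z, hxz, hz⟩ := exists_between (lt_min hxu hxy)
  exact hgap.notMem_of_mem_left ⟨hxz, hz.trans_le (min_le_right _ _)⟩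
    (hIco ⟨hxz.le, hz.trans_le (min_le_left _ _)⟩)

/-- Cantor's intersection theorem, applied to the fibres of `(a, b) ↦ a - b`. -/
lemma iInter_sub_iInter {G : Type*} [TopologicalSpace G] [Sub G] [ContinuousSub G] [T2Space G]
    {K L : ℕ → Set G} (hK : Antitone K) (hL : Antitone L) (hKc : ∀ n, IsCompact (K n))
    (hLc : ∀ n, IsCompact (L n)) : (⋂ n, K n) - ⋂ n, L n = ⋂ n, (K n - L n) := by
  refine Subset.antisymm
    (subset_iInter fun n => sub_subset_sub (iInter_subset _ n) (iInter_subset _ n)) fun x hx => ?_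
  set P : ℕ → Set (G × G) := fun n => K n ×ˢ L n ∩ (fun q => q.1 - q.2) ⁻¹' {x}
  have hPc (n : ℕ) : IsCompact (P n) :=
    ((hKc n).prod (hLc n)).inter_right (isClosed_singleton.preimage continuous_sub)
  obtain ⟨q, hq⟩ := (hPc 0).nonempty_iInter_of_sequence_nonempty_isCompact_isClosed P
    (fun n => inter_subset_inter_left _ (prod_mono (hK n.le_succ) (hL n.le_succ)))
    (fun n => by
      obtain ⟨a, ha, b, hb, hab⟩ := mem_iInter.1 hx n
      exact ⟨(a, b), ⟨ha, hb⟩, hab⟩)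
    (fun n => (hPc n).isClosed)
  rw [mem_iInter] at hq
  exact ⟨q.1, mem_iInter.2 fun n => (hq n).1.1, q.2, mem_iInter.2 fun n => (hq n).1.2, (hq 0).2⟩

end Topology

namespace CentralCantor

/-- `λ ∈ (0, 1/2)^ℕ`, with `lam` indexed from `1`. -/
def IsRatioSeq (lam : ℕ → ℝ) : Prop := ∀ n, 1 ≤ n → lam n ∈ Ioo (0 : ℝ) (1 / 2)

variable {lam : ℕ → ℝ}

lemma dseq_zero : dseq lam 0 = 1 := by simp [dseq]

lemma dseq_succ (n : ℕ) : dseq lam (n + 1) = dseq lam n * lam (n + 1) :=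
  Finset.prod_Icc_succ_top (by omega) _

lemma dseq_pos (hlam : IsRatioSeq lam) (n : ℕ) : 0 < dseq lam n := by
  induction n with
  | zero => simp [dseq_zero]
  | succ n ih => rw [dseq_succ]; exact mul_pos ih (hlam (n + 1) (by omega)).1

lemma two_mul_dseq_succ_lt (hlam : IsRatioSeq lam) (n : ℕ) :
    2 * dseq lam (n + 1) < dseq lam n := by
  have := (hlam (n + 1) (by omega)).2
  rw [dseq_succ]
  nlinarith [dseq_pos hlam n]

lemma dseq_sub_dseq_succ_pos (hlam : IsRatioSeq lam) (n : ℕ) :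
    0 < dseq lam n - dseq lam (n + 1) := by
  linarith [two_mul_dseq_succ_lt hlam n, dseq_pos hlam (n + 1)]

lemma strictAnti_dseq_sub_dseq_succ (hlam : IsRatioSeq lam) :
    StrictAnti fun n => dseq lam n - dseq lam (n + 1) :=
  strictAnti_nat_of_succ_lt fun n => by
    linarith [two_mul_dseq_succ_lt hlam n, dseq_pos hlam (n + 2)]

lemma leftI_eq_sum_range (p : List Bool) :
    leftI lam p = ∑ k ∈ Finset.range p.length,
      if p.getD k false then dseq lam k - dseq lam (k + 1) else 0 := by
  rw [leftI, ← Fin.sum_univ_eq_sum_range]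
  refine Finset.sum_congr rfl fun i _ => ?_
  rw [List.get_eq_getElem, List.getD_eq_getElem _ _ i.isLt]

@[simp]
lemma leftI_nil : leftI lam [] = 0 := by simp [leftI]

lemma leftI_concat (p : List Bool) (b : Bool) :
    leftI lam (p ++ [b]) =
      leftI lam p + if b then dseq lam p.length - dseq lam (p.length + 1) else 0 := by
  rw [leftI_eq_sum_range, leftI_eq_sum_range, List.length_append, List.length_singleton,
    Finset.sum_range_succ, List.getD_append_right _ _ _ _ le_rfl, Nat.sub_self]
  congr 1
  refine Finset.sum_congr rfl fun k hk => ?_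
  rw [List.getD_append _ _ _ _ (Finset.mem_range.mp hk)]

lemma leftI_nonneg (hlam : IsRatioSeq lam) (p : List Bool) : 0 ≤ leftI lam p :=
  Finset.sum_nonneg fun i _ => by
    split_ifs
    exacts [(dseq_sub_dseq_succ_pos hlam i).le, le_rfl]

lemma leftI_eq_zero {p : List Bool} (hp : true ∉ p) : leftI lam p = 0 :=
  Finset.sum_eq_zero fun i _ => if_neg fun h : p.get i = true => hp (h ▸ List.get_mem p i)

/-- Reflection `x ↦ 1 - x` maps `I_p` onto `I_{¬p}`. -/
lemma leftI_add_leftI_map_not (p : List Bool) :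
    leftI lam p + leftI lam (p.map not) + dseq lam p.length = 1 := by
  induction p using List.reverseRecOn with
  | nil => simp [dseq_zero]
  | append_singleton p b ih =>
    rw [List.map_append, List.map_singleton, leftI_concat, leftI_concat, List.length_map,
      List.length_append, List.length_singleton]
    cases b <;> simp <;> linarith

lemma le_leftI_of_true_mem (hlam : IsRatioSeq lam) {m : ℕ} {p : List Bool} (hp : true ∈ p)
    (hlen : p.length ≤ m + 1) : dseq lam m - dseq lam (m + 1) ≤ leftI lam p := by
  induction p using List.reverseRecOn with
  | nil => simp at hp
  | append_singleton p b ih =>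
    rw [List.length_append, List.length_singleton] at hlen
    rw [leftI_concat]
    rcases List.mem_append.mp hp with hp | hp
    · have := ih hp (by omega)
      split_ifs <;> linarith [dseq_sub_dseq_succ_pos hlam p.length]
    · rw [List.mem_singleton.mp hp, if_pos rfl]
      linarith [leftI_nonneg hlam p,
        (strictAnti_dseq_sub_dseq_succ hlam).antitone (show p.length ≤ m by omega)]

lemma Iset_concat_subset (hlam : IsRatioSeq lam) (p : List Bool) (b : Bool) :
    Iset lam (p ++ [b]) ⊆ Iset lam p := by
  rw [Iset, Iset, leftI_concat, List.length_append, List.length_singleton]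
  have := dseq_sub_dseq_succ_pos hlam p.length
  apply Icc_subset_Icc <;> split_ifs <;> linarith

lemma mem_CnSet {x : ℝ} {n : ℕ} :
    x ∈ CnSet lam n ↔ ∃ p : List Bool, p.length = n ∧ x ∈ Iset lam p := by
  simp [CnSet]

lemma antitone_CnSet (hlam : IsRatioSeq lam) : Antitone (CnSet lam) :=
  antitone_nat_of_succ_le fun n x hx => by
    obtain ⟨p, hp, hxp⟩ := mem_CnSet.1 hx
    obtain ⟨q, b, rfl⟩ := (List.eq_nil_or_concat' p).resolve_left (by rintro rfl; simp at hp)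
    exact mem_CnSet.2 ⟨q, by simpa using hp, Iset_concat_subset hlam q b hxp⟩

lemma isCompact_CnSet (n : ℕ) : IsCompact (CnSet lam n) :=
  (List.finite_length_eq Bool n).isCompact_biUnion fun _ _ => isCompact_Icc

lemma leftI_mem_CSet (hlam : IsRatioSeq lam) (p : List Bool) : leftI lam p ∈ CSet lam := by
  have hpad (k : ℕ) : leftI lam (p ++ List.replicate k false) = leftI lam p := by
    induction k with
    | zero => simp
    | succ k ih => simp [List.replicate_succ', ← List.append_assoc, leftI_concat, ih]
  refine mem_iInter.2 fun n => antitone_CnSet hlam (Nat.le_add_left n p.length) ?_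
  refine mem_CnSet.2 ⟨p ++ List.replicate n false, by simp, ?_⟩
  rw [Iset, hpad]
  exact left_mem_Icc.2 (le_add_of_nonneg_right (dseq_pos hlam _).le)

lemma one_sub_mem_CSet {x : ℝ} (hx : x ∈ CSet lam) : 1 - x ∈ CSet lam := by
  refine mem_iInter.2 fun n => ?_
  obtain ⟨p, hp, hxp⟩ := mem_CnSet.1 (mem_iInter.1 hx n)
  refine mem_CnSet.2 ⟨p.map not, by simpa using hp, ?_⟩
  have := leftI_add_leftI_map_not (lam := lam) p
  rw [Iset] at hxp ⊢
  rw [List.length_map]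
  constructor <;> linarith [hxp.1, hxp.2]

/-- Unless `p = 1⋯1` and `q = 0⋯0`, some digit `j ≤ m` gives
`l_p + d_{m+1} - l_q ≤ 1 - c_j ≤ 1 - c_m`. -/
lemma disjoint_Ioo_CSet_sub_CSet (hlam : IsRatioSeq lam) (m : ℕ) :
    Disjoint (Ioo (1 - (dseq lam m - dseq lam (m + 1))) (1 - 2 * dseq lam (m + 1)))
      (CSet lam - CSet lam) := by
  rw [Set.disjoint_right]
  rintro _ ⟨a, ha, b, hb, rfl⟩ ⟨hlow, hup⟩
  dsimp only at hlow hup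
  obtain ⟨p, hp, hap⟩ := mem_CnSet.1 (mem_iInter.1 ha (m + 1))
  obtain ⟨q, hq, hbq⟩ := mem_CnSet.1 (mem_iInter.1 hb (m + 1))
  rw [Iset, hp] at hap
  rw [Iset, hq] at hbq
  have hpq := leftI_add_leftI_map_not (lam := lam) p
  rw [hp] at hpq
  by_cases hq' : true ∈ q
  · linarith [le_leftI_of_true_mem hlam hq' hq.le, leftI_nonneg hlam (p.map not), hap.2, hbq.1]
  by_cases hp' : true ∈ p.map not
  · linarith [le_leftI_of_true_mem (m := m) hlam hp' (by simp [hp]), leftI_nonneg hlam q,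
      hap.2, hbq.1]
  rw [leftI_eq_zero hq'] at hbq
  rw [leftI_eq_zero hp'] at hpq
  linarith [hap.1, hbq.2]

lemma one_sub_mem_frontier (hlam : IsRatioSeq lam) {m : ℕ} (hm : lam (m + 1) < 1 / 3) :
    1 - (dseq lam m - dseq lam (m + 1)) ∈ frontier (CSet lam - CSet lam) := by
  have hgap : leftI lam (List.replicate m false ++ [true]) = dseq lam m - dseq lam (m + 1) := by
    simp [leftI_concat, leftI_eq_zero]
  refine mem_frontier_of_disjoint_Ioo ?_ ?_ (disjoint_Ioo_CSet_sub_CSet hlam m)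
  · have := sub_mem_sub (one_sub_mem_CSet (hgap ▸ leftI_mem_CSet hlam _))
      (leftI_nil (lam := lam) ▸ leftI_mem_CSet hlam [])
    rwa [sub_zero] at this
  · rw [dseq_succ]
    nlinarith [dseq_pos hlam m]

lemma finite_of_finite_frontier (hlam : IsRatioSeq lam)
    (h : (frontier (CSet lam - CSet lam)).Finite) : {n : ℕ | 1 ≤ n ∧ lam n < 1 / 3}.Finite := by
  have hinj : Function.Injective fun m => 1 - (dseq lam m - dseq lam (m + 1)) :=
    (sub_right_injective).comp (strictAnti_dseq_sub_dseq_succ hlam).injective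
  have hfin : {m : ℕ | lam (m + 1) < 1 / 3}.Finite :=
    (h.preimage hinj.injOn).subset fun m hm => one_sub_mem_frontier hlam hm
  refine (hfin.image (· + 1)).subset fun n ⟨hn1, hn⟩ => ⟨n - 1, ?_, Nat.sub_add_cancel hn1⟩
  simpa [Nat.sub_add_cancel hn1] using hn

lemma mem_CnSet_sub_CnSet_iff {x : ℝ} {n : ℕ} :
    x ∈ CnSet lam n - CnSet lam n ↔ ∃ p : List Bool, p.length = n ∧ ∃ q : List Bool,
      q.length = n ∧ |x - (leftI lam p - leftI lam q)| ≤ dseq lam n := by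
  constructor
  · rintro ⟨a, ha, b, hb, rfl⟩
    obtain ⟨p, hp, hap⟩ := mem_CnSet.1 ha
    obtain ⟨q, hq, hbq⟩ := mem_CnSet.1 hb
    rw [Iset, hp] at hap
    rw [Iset, hq] at hbq
    exact ⟨p, hp, q, hq, abs_le.2 ⟨by linarith [hap.1, hbq.2], by linarith [hap.2, hbq.1]⟩⟩
  · rintro ⟨p, hp, q, hq, hx⟩
    obtain ⟨h₁, h₂⟩ := abs_le.1 hx
    have hI {r : List Bool} (hr : r.length = n) {y : ℝ} (hy₁ : leftI lam r ≤ y)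
        (hy₂ : y ≤ leftI lam r + dseq lam n) : y ∈ CnSet lam n :=
      mem_CnSet.2 ⟨r, hr, by rw [Iset, hr]; exact ⟨hy₁, hy₂⟩⟩
    rcases le_total 0 (x - (leftI lam p - leftI lam q)) with h | h
    · exact ⟨_, hI hp (le_add_of_nonneg_right h) (by linarith), _,
        hI hq le_rfl (by linarith), by ring⟩
    · exact ⟨_, hI hp le_rfl (by linarith), _,
        hI hq (le_sub_self_iff _ |>.2 h) (by linarith), by ring⟩

/-- `I_p - I_q` has centre `δ = l_p - l_q` and radius `d_n`; the differences of its children have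
centres `δ - c, δ, δ + c` (with `c = d_n - d_{n+1}`) and radius `d_{n+1}`, so they overlap, and
hence cover `I_p - I_q`, exactly when `d_n ≤ 3 d_{n+1}`. -/
lemma CnSet_sub_CnSet_subset_succ (hlam : IsRatioSeq lam) {n : ℕ} (h : 1 / 3 ≤ lam (n + 1)) :
    CnSet lam n - CnSet lam n ⊆ CnSet lam (n + 1) - CnSet lam (n + 1) := by
  intro x hx
  obtain ⟨p, hp, q, hq, hx⟩ := mem_CnSet_sub_CnSet_iff.1 hx
  set δ := leftI lam p - leftI lam q
  set c := dseq lam n - dseq lam (n + 1)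
  have hconcat (b b' : Bool) :
      leftI lam (p ++ [b]) - leftI lam (q ++ [b']) =
        δ + (if b then c else 0) - if b' then c else 0 := by
    rw [leftI_concat, leftI_concat, hp, hq]
    ring
  have hcover : dseq lam n ≤ 3 * dseq lam (n + 1) := by
    rw [dseq_succ]
    nlinarith [dseq_pos hlam n]
  obtain ⟨h₁, h₂⟩ := abs_le.1 hx
  obtain ⟨b, b', hb⟩ : ∃ b b' : Bool,
      |x - (δ + (if b then c else 0) - if b' then c else 0)| ≤ dseq lam (n + 1) := by
    by_cases hright : dseq lam (n + 1) < x - δ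
    · exact ⟨true, false, abs_le.2 ⟨by simp; linarith, by simp; linarith⟩⟩
    by_cases hleft : x - δ < -dseq lam (n + 1)
    · exact ⟨false, true, abs_le.2 ⟨by simp; linarith, by simp; linarith⟩⟩
    · exact ⟨false, false, abs_le.2 ⟨by simp; linarith, by simp; linarith⟩⟩
  exact mem_CnSet_sub_CnSet_iff.2
    ⟨p ++ [b], by simp [hp], q ++ [b'], by simp [hq], by rwa [hconcat]⟩

lemma CSet_sub_CSet_eq_CnSet_sub_CnSet (hlam : IsRatioSeq lam) {N : ℕ}
    (h : ∀ n, N ≤ n → 1 / 3 ≤ lam (n + 1)) :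
    CSet lam - CSet lam = CnSet lam N - CnSet lam N := by
  have hanti : Antitone fun n => CnSet lam n - CnSet lam n := fun m n hmn =>
    sub_subset_sub (antitone_CnSet hlam hmn) (antitone_CnSet hlam hmn)
  have hstable : ∀ n, N ≤ n → CnSet lam N - CnSet lam N ⊆ CnSet lam n - CnSet lam n :=
    Nat.le_induction subset_rfl fun n hn ih => ih.trans (CnSet_sub_CnSet_subset_succ hlam (h n hn))
  rw [CSet, iInter_sub_iInter (antitone_CnSet hlam) (antitone_CnSet hlam) isCompact_CnSet
    isCompact_CnSet]
  exact Subset.antisymm (iInter_subset _ N)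
    (subset_iInter fun n => (le_total n N).elim (fun hn => hanti hn) (hstable n))

lemma exists_finset_CnSet_sub_CnSet_eq (n : ℕ) :
    ∃ F : Finset (ℝ × ℝ), CnSet lam n - CnSet lam n = ⋃ r ∈ F, Icc r.1 r.2 := by
  have hS := List.finite_length_eq Bool n
  refine ⟨((hS.prod hS).image fun pq => (leftI lam pq.1 - leftI lam pq.2 - dseq lam n,
    leftI lam pq.1 - leftI lam pq.2 + dseq lam n)).toFinset, ?_⟩
  ext x
  simp only [mem_CnSet_sub_CnSet_iff, Set.Finite.mem_toFinset, mem_iUnion, mem_image, mem_prod,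
    mem_ofPred_eq, exists_prop, abs_le, mem_Icc]
  constructor
  · rintro ⟨p, hp, q, hq, h₁, h₂⟩
    exact ⟨_, ⟨(p, q), ⟨hp, hq⟩, rfl⟩, by linarith, by linarith⟩
  · rintro ⟨_, ⟨⟨p, q⟩, ⟨hp, hq⟩, rfl⟩, h₁, h₂⟩
    exact ⟨p, hp, q, hq, by linarith, by linarith⟩

end CentralCantor

open CentralCantor in
/-- `C(λ) - C(λ)` is a finite union of closed intervals iff `{n : λₙ < 1/3}` is finite. -/
theorem CSet_sub_CSet_finite_union_iff (lam : ℕ → ℝ)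
    (hlam : ∀ n, 1 ≤ n → lam n ∈ Ioo (0 : ℝ) (1 / 2)) :
    (∃ F : Finset (ℝ × ℝ), CSet lam - CSet lam = ⋃ p ∈ F, Icc p.1 p.2) ↔
      {n : ℕ | 1 ≤ n ∧ lam n < 1 / 3}.Finite := by
  constructor
  · rintro ⟨F, hF⟩
    exact finite_of_finite_frontier hlam (hF ▸ finite_frontier_biUnion_Icc F)
  · intro hfin
    obtain ⟨N, hN⟩ := hfin.bddAbove
    have hratio (n : ℕ) (hn : N ≤ n) : 1 / 3 ≤ lam (n + 1) :=
      not_lt.1 fun hlt => absurd (hN ⟨by omega, hlt⟩) (by omega)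
    rw [CSet_sub_CSet_eq_CnSet_sub_CnSet hlam hratio]
    exact exists_finset_CnSet_sub_CnSet_eq N
end
end

section
/- If λ_n ≥ 1/3 for all n ≥ k+1, then C(λ) - C(λ) = C_k(λ) - C_k(λ) = ⋃_{s ∈ {0,1,2}^k} J_s, a union of at most 3^k closed intervals. -/
open Set Pointwise Filter MeasureTheory

noncomputable section

/-!
`C_n - C_n` is the union of the intervals `J_s`, `|s| = n`, where `J_s` has half-length
`d_n = λ₁ ⋯ λₙ` and its three children `J_{s0}, J_{s1}, J_{s2}` have half-length `d_{n+1}` and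
centres at distance `0` and `d_n - d_{n+1}` from the centre of `J_s`. They cover `J_s` as soon
as `d_n ≤ 3 d_{n+1}`, i.e. `λ_{n+1} ≥ 1/3`, so under the hypothesis the difference sets
`C_n - C_n` stop shrinking after stage `k`. Since the `C_n` are nested compact sets,
`C - C = ⋂ₙ (C_n - C_n)`, which is therefore `C_k - C_k`.
-/

theorem iInter_sub_iInter_of_antitone {G : Type*} [AddGroup G] [TopologicalSpace G]
    [ContinuousAdd G] [T2Space G] {K L : ℕ → Set G} (hK : Antitone K) (hL : Antitone L)
    (hKc : ∀ n, IsCompact (K n)) (hLc : ∀ n, IsClosed (L n)) :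
    (⋂ n, K n) - ⋂ n, L n = ⋂ n, (K n - L n) := by
  refine (subset_iInter fun n => sub_subset_sub (iInter_subset _ n) (iInter_subset _ n)).antisymm
    fun x hx => ?_
  rw [mem_iInter] at hx
  -- `T n` consists of the `y ∈ K n` with `x = y - z` for some `z ∈ L n`.
  set T : ℕ → Set G := fun n => K n ∩ (fun y => -x + y) ⁻¹' L n
  have hLx : ∀ n, IsClosed ((fun y => -x + y) ⁻¹' L n) := fun n =>
    (hLc n).preimage (continuous_const.add continuous_id)
  have hTc : ∀ n, IsClosed (T n) := fun n => (hKc n).isClosed.inter (hLx n)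
  obtain ⟨y, hy⟩ := IsCompact.nonempty_iInter_of_sequence_nonempty_isCompact_isClosed T
    (fun n => inter_subset_inter (hK n.le_succ) (preimage_mono (hL n.le_succ)))
    (fun n => by
      obtain ⟨y, hy, z, hz, rfl⟩ := hx n
      exact ⟨y, hy, by simpa [neg_sub] using hz⟩)
    ((hKc 0).inter_right (hLx 0)) hTc
  rw [mem_iInter] at hy
  exact ⟨y, mem_iInter.2 fun n => (hy n).1, -x + y, mem_iInter.2 fun n => (hy n).2,
    by simp [sub_eq_add_neg]⟩

variable {lam : ℕ → ℝ}

lemma dseq_succ (n : ℕ) : dseq lam (n + 1) = dseq lam n * lam (n + 1) := by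
  rw [dseq, dseq, Finset.prod_Icc_succ_top (by omega)]

lemma dseq_nonneg (h0 : ∀ n, 1 ≤ n → 0 ≤ lam n) (n : ℕ) : 0 ≤ dseq lam n :=
  Finset.prod_nonneg fun i hi => h0 i (Finset.mem_Icc.1 hi).1

lemma dseq_antitone (h01 : ∀ n, 1 ≤ n → lam n ∈ Icc (0 : ℝ) 1) : Antitone (dseq lam) :=
  antitone_nat_of_succ_le fun n => by
    rw [dseq_succ]
    exact mul_le_of_le_one_right (dseq_nonneg (fun m hm => (h01 m hm).1) n)
      (h01 (n + 1) n.succ_pos).2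

lemma leftI_eq_sum_range (p : List Bool) : leftI lam p =
    ∑ i ∈ Finset.range p.length,
      if p.getD i false then dseq lam i - dseq lam (i + 1) else 0 := by
  rw [leftI, ← Fin.sum_univ_eq_sum_range
    (fun i => if p.getD i false then dseq lam i - dseq lam (i + 1) else 0) p.length]
  refine Finset.sum_congr rfl fun i _ => ?_
  rw [List.getD_eq_getElem _ _ i.isLt]
  rfl

lemma leftI_append_singleton (p : List Bool) (b : Bool) : leftI lam (p ++ [b]) =
    leftI lam p + if b then dseq lam p.length - dseq lam (p.length + 1) else 0 := by
  rw [leftI_eq_sum_range, leftI_eq_sum_range, List.length_append, List.length_singleton,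
    Finset.sum_range_succ, List.getD_append_right _ _ _ _ le_rfl]
  congr 1
  · refine Finset.sum_congr rfl fun i hi => ?_
    rw [List.getD_append _ _ _ _ (Finset.mem_range.1 hi)]
  · simp

lemma Iset_append_singleton_subset (h01 : ∀ n, 1 ≤ n → lam n ∈ Icc (0 : ℝ) 1)
    (p : List Bool) (b : Bool) : Iset lam (p ++ [b]) ⊆ Iset lam p := by
  have hle := dseq_antitone h01 p.length.le_succ
  have hnonneg := dseq_nonneg (fun m hm => (h01 m hm).1) (p.length + 1)
  rw [Iset, Iset, leftI_append_singleton, List.length_append, List.length_singleton]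
  apply Icc_subset_Icc <;> cases b <;> simp <;> linarith

lemma Iset_subset_CnSet {p : List Bool} {n : ℕ} (hp : p.length = n) :
    Iset lam p ⊆ CnSet lam n :=
  subset_biUnion_of_mem (u := Iset lam) hp

lemma CnSet_antitone (h01 : ∀ n, 1 ≤ n → lam n ∈ Icc (0 : ℝ) 1) : Antitone (CnSet lam) :=
  antitone_nat_of_succ_le fun n => iUnion₂_subset fun p hp => by
    have hne : p ≠ [] := List.ne_nil_of_length_eq_add_one hp
    rw [← List.dropLast_append_getLast hne]
    exact (Iset_append_singleton_subset h01 _ _).trans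
      (Iset_subset_CnSet (by simp [show p.length = n + 1 from hp]))

lemma isCompact_CnSet (n : ℕ) : IsCompact (CnSet lam n) :=
  (List.finite_length_eq Bool n).isCompact_biUnion fun _ _ => isCompact_Icc

def Jcenter (lam : ℕ → ℝ) (s : List (Fin 3)) : ℝ :=
  leftI lam (s.map fun a => decide (a = 2)) - leftI lam (s.map fun a => decide (a = 0))

lemma Jset_eq_Icc (h0 : ∀ n, 1 ≤ n → 0 ≤ lam n) (s : List (Fin 3)) :
    Jset lam s = Icc (Jcenter lam s - dseq lam s.length) (Jcenter lam s + dseq lam s.length) := by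
  have hd := dseq_nonneg h0 s.length
  rw [Jset, Iset, Iset, List.length_map, List.length_map, sub_eq_add_neg, neg_Icc,
    Icc_add_Icc (by linarith) (by linarith), Jcenter]
  congr 1 <;> ring

lemma Jcenter_append_singleton (s : List (Fin 3)) (a : Fin 3) :
    Jcenter lam (s ++ [a]) =
      Jcenter lam s + ((a : ℝ) - 1) * (dseq lam s.length - dseq lam (s.length + 1)) := by
  rw [Jcenter, Jcenter, List.map_append, List.map_append, List.map_singleton, List.map_singleton,
    leftI_append_singleton, leftI_append_singleton, List.length_map, List.length_map]
  fin_cases a <;> simp <;> ring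

lemma Jset_subset_iUnion_append (h0 : ∀ n, 1 ≤ n → 0 ≤ lam n) {s : List (Fin 3)}
    (h3 : 1 / 3 ≤ lam (s.length + 1)) : Jset lam s ⊆ ⋃ a : Fin 3, Jset lam (s ++ [a]) := by
  intro x hx
  have hd := dseq_nonneg h0 s.length
  have hd3 : dseq lam s.length ≤ 3 * dseq lam (s.length + 1) := by
    rw [dseq_succ]; nlinarith
  rw [Jset_eq_Icc h0] at hx
  simp only [mem_iUnion, Jset_eq_Icc h0, Jcenter_append_singleton, List.length_append,
    List.length_singleton, mem_Icc]
  obtain ⟨hx1, hx2⟩ := hx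
  rcases le_total x (Jcenter lam s - dseq lam (s.length + 1)) with hlow | hlow
  · exact ⟨0, by norm_num; constructor <;> linarith⟩
  rcases le_total (Jcenter lam s + dseq lam (s.length + 1)) x with hhigh | hhigh
  · exact ⟨2, by norm_num; constructor <;> linarith⟩
  · exact ⟨1, by norm_num; constructor <;> linarith⟩

/-- The digit `b - c + 1 ∈ {0, 1, 2}`. -/
def subDigit (b c : Bool) : Fin 3 := if b then (if c then 1 else 2) else (if c then 0 else 1)

lemma Jcenter_zipWith_subDigit {p q : List Bool} (hpq : p.length = q.length) :
    Jcenter lam (List.zipWith subDigit p q) = leftI lam p - leftI lam q := by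
  have hlen : (List.zipWith subDigit p q).length = p.length := by simp [hpq]
  rw [Jcenter, leftI_eq_sum_range, leftI_eq_sum_range, leftI_eq_sum_range, leftI_eq_sum_range,
    List.length_map, List.length_map, hlen, ← hpq, ← Finset.sum_sub_distrib,
    ← Finset.sum_sub_distrib]
  refine Finset.sum_congr rfl fun i hi => ?_
  have hp : i < p.length := Finset.mem_range.1 hi
  have hq : i < q.length := hpq ▸ hp
  rw [List.getD_eq_getElem _ _ (by simp [hp, hq]), List.getD_eq_getElem _ _ (by simp [hp, hq]),
    List.getD_eq_getElem _ _ hp, List.getD_eq_getElem _ _ hq,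
    List.getElem_map, List.getElem_map, List.getElem_zipWith]
  cases p[i] <;> cases q[i] <;> simp [subDigit]

lemma CnSet_sub_CnSet_eq_biUnion_Jset (h0 : ∀ n, 1 ≤ n → 0 ≤ lam n) (n : ℕ) :
    CnSet lam n - CnSet lam n = ⋃ s ∈ {s : List (Fin 3) | s.length = n}, Jset lam s := by
  refine Subset.antisymm ?_ (iUnion₂_subset fun s hs => sub_subset_sub
    (Iset_subset_CnSet (by simpa using hs)) (Iset_subset_CnSet (by simpa using hs)))
  rintro _ ⟨y, hy, z, hz, rfl⟩
  simp only [CnSet, mem_iUnion, mem_ofPred_eq, exists_prop] at hy hz ⊢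
  obtain ⟨p, rfl, hyp⟩ := hy
  obtain ⟨q, hq, hzq⟩ := hz
  have hlen : (List.zipWith subDigit p q).length = p.length := by simp [hq]
  refine ⟨List.zipWith subDigit p q, hlen, ?_⟩
  rw [Jset_eq_Icc h0, Jcenter_zipWith_subDigit hq.symm, hlen]
  rw [Iset, mem_Icc] at hyp hzq
  rw [hq] at hzq
  constructor <;> linarith [hyp.1, hyp.2, hzq.1, hzq.2]

lemma CnSet_sub_CnSet_subset_of_le (h0 : ∀ n, 1 ≤ n → 0 ≤ lam n) {k : ℕ}
    (h : ∀ n, k + 1 ≤ n → (1 : ℝ) / 3 ≤ lam n) {n : ℕ} (hkn : k ≤ n) :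
    CnSet lam k - CnSet lam k ⊆ CnSet lam n - CnSet lam n := by
  induction n, hkn using Nat.le_induction with
  | base => rfl
  | succ n hkn ih =>
    refine ih.trans ?_
    rw [CnSet_sub_CnSet_eq_biUnion_Jset h0, CnSet_sub_CnSet_eq_biUnion_Jset h0]
    refine iUnion₂_subset fun s hs => (Jset_subset_iUnion_append h0 ?_).trans ?_
    · exact h _ (by rw [show s.length = n from hs]; omega)
    · exact iUnion_subset fun a => subset_biUnion_of_mem (u := Jset lam) (by simpa using hs)

/-- If `λₙ ≥ 1/3` for all `n ≥ k + 1`, then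
`C(λ) - C(λ) = C_k(λ) - C_k(λ) = ⋃_{s ∈ {0,1,2}^k} J_s`. -/
theorem CSet_sub_CSet_of_eventually_ge (lam : ℕ → ℝ)
    (hlam : ∀ n, 1 ≤ n → lam n ∈ Ioo (0 : ℝ) (1 / 2)) (k : ℕ)
    (h : ∀ n, k + 1 ≤ n → (1 : ℝ) / 3 ≤ lam n) :
    CSet lam - CSet lam = CnSet lam k - CnSet lam k ∧
    CnSet lam k - CnSet lam k = ⋃ s ∈ {s : List (Fin 3) | s.length = k}, Jset lam s := by
  have h01 : ∀ n, 1 ≤ n → lam n ∈ Icc (0 : ℝ) 1 := fun n hn =>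
    ⟨(hlam n hn).1.le, (hlam n hn).2.le.trans (by norm_num)⟩
  have h0 : ∀ n, 1 ≤ n → 0 ≤ lam n := fun n hn => (h01 n hn).1
  have hstable : ∀ n, CnSet lam k - CnSet lam k ⊆ CnSet lam n - CnSet lam n := fun n =>
    (le_total n k).elim
      (fun hnk => sub_subset_sub (CnSet_antitone h01 hnk) (CnSet_antitone h01 hnk))
      (CnSet_sub_CnSet_subset_of_le h0 h)
  refine ⟨?_, CnSet_sub_CnSet_eq_biUnion_Jset h0 k⟩
  rw [CSet, iInter_sub_iInter_of_antitone (CnSet_antitone h01) (CnSet_antitone h01)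
    isCompact_CnSet fun n => (isCompact_CnSet n).isClosed]
  exact (iInter_subset _ k).antisymm (subset_iInter hstable)
end
end

section
/- Suppose λ ∈ (0,1/2)^ℕ satisfies λ_n < 1/3 for infinitely many n. Then C(λ) - C(λ) ≠ [-1,1], and moreover for every w > 0 there exists x ∈ [-1, -1+w] with x ∉ C(λ) - C(λ). -/
open Set Pointwise Filter MeasureTheory

noncomputable section

namespace CCaux

variable {lam : ℕ → ℝ}

lemma dseq_zero (lam : ℕ → ℝ) : dseq lam 0 = 1 := by simp [dseq]

lemma dseq_succ (lam : ℕ → ℝ) (k : ℕ) :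
    dseq lam (k + 1) = dseq lam k * lam (k + 1) := by
  unfold dseq
  rw [Finset.prod_Icc_succ_top (Nat.succ_le_succ (Nat.zero_le k))]

lemma sum_tele (lam : ℕ → ℝ) (n : ℕ) :
    ∑ i : Fin n, (dseq lam (i : ℕ) - dseq lam ((i : ℕ) + 1)) = 1 - dseq lam n := by
  rw [Fin.sum_univ_eq_sum_range (fun i => dseq lam i - dseq lam (i + 1)) n,
      Finset.sum_range_sub' (fun i => dseq lam i), dseq_zero]

variable (hlam : ∀ n, 1 ≤ n → lam n ∈ Ioo (0 : ℝ) (1 / 2))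
include hlam

lemma dseq_pos : ∀ n, 0 < dseq lam n := by
  intro n; induction n with
  | zero => simp [dseq_zero]
  | succ k ih =>
      rw [dseq_succ]
      exact mul_pos ih (hlam (k + 1) (Nat.succ_le_succ (Nat.zero_le k))).1

lemma dseq_two_mul (k : ℕ) : 2 * dseq lam (k + 1) < dseq lam k := by
  have h := (hlam (k + 1) (Nat.succ_le_succ (Nat.zero_le k))).2
  have hp := dseq_pos hlam k
  rw [dseq_succ]; nlinarith

lemma dseq_succ_lt (k : ℕ) : dseq lam (k + 1) < dseq lam k := by
  have h1 := dseq_two_mul hlam k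
  have h2 := dseq_pos hlam (k + 1)
  linarith

lemma dseq_anti : Antitone (dseq lam) :=
  antitone_nat_of_succ_le fun k => (dseq_succ_lt hlam k).le

lemma dseq_le_pow (n : ℕ) : dseq lam n ≤ (1 / 2) ^ n := by
  induction n with
  | zero => simp [dseq_zero]
  | succ k ih =>
      rw [dseq_succ, pow_succ]
      have h := hlam (k + 1) (Nat.succ_le_succ (Nat.zero_le k))
      have hp := dseq_pos hlam k
      have hpw : (0:ℝ) ≤ (1/2)^k := by positivity
      nlinarith [h.1, h.2]

lemma key_term {i n : ℕ} (h : i < n + 1) :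
    dseq lam n - dseq lam (n + 1) ≤ dseq lam i - dseq lam (i + 1) := by
  rcases eq_or_lt_of_le (Nat.lt_succ_iff.mp h) with rfl | hi
  · exact le_refl _
  · have h1 := dseq_two_mul hlam i
    have h2 : dseq lam n ≤ dseq lam (i + 1) := dseq_anti hlam (Nat.succ_le_of_lt hi)
    have h3 := dseq_pos hlam (n + 1)
    linarith

lemma leftI_nonneg (p : List Bool) : 0 ≤ leftI lam p := by
  apply Finset.sum_nonneg
  intro i _
  cases hpi : p.get i <;> simp [hpi]
  linarith [dseq_succ_lt hlam (i : ℕ)]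

lemma leftI_le (p : List Bool) : leftI lam p ≤ 1 - dseq lam p.length := by
  rw [← sum_tele lam p.length]
  apply Finset.sum_le_sum
  intro i _
  cases hpi : p.get i <;> simp [hpi]
  linarith [dseq_succ_lt hlam (i : ℕ)]

lemma leftI_ge_of_true (p : List Bool) (j : Fin p.length) (hj : p.get j = true) :
    dseq lam (j : ℕ) - dseq lam ((j : ℕ) + 1) ≤ leftI lam p := by
  have h1 : ∀ i ∈ Finset.univ, (0:ℝ) ≤
      (if p.get i then dseq lam (i : ℕ) - dseq lam ((i : ℕ) + 1) else 0) := by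
    intro i _
    cases hpi : p.get i <;> simp [hpi]
    linarith [dseq_succ_lt hlam (i : ℕ)]
  have h2 := Finset.single_le_sum h1 (Finset.mem_univ j)
  rw [if_pos hj] at h2
  unfold leftI
  exact h2

lemma leftI_le_of_false (p : List Bool) (j : Fin p.length) (hj : p.get j = false) :
    leftI lam p ≤ 1 - dseq lam p.length - (dseq lam (j : ℕ) - dseq lam ((j : ℕ) + 1)) := by
  have hfj : (fun i : Fin p.length =>
      if p.get i then dseq lam (i : ℕ) - dseq lam ((i : ℕ) + 1) else 0) j = 0 := by
    simp only [hj]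
    simp
  have key : leftI lam p ≤
      (∑ i : Fin p.length, (dseq lam (i : ℕ) - dseq lam ((i : ℕ) + 1)))
        - (dseq lam (j : ℕ) - dseq lam ((j : ℕ) + 1)) := by
    rw [← Finset.sum_erase_eq_sub (Finset.mem_univ j)]
    calc leftI lam p
        = ∑ i ∈ Finset.univ.erase j,
            (if p.get i then dseq lam (i : ℕ) - dseq lam ((i : ℕ) + 1) else 0) :=
          (Finset.sum_erase (f := fun i : Fin p.length => if p.get i then dseq lam (i : ℕ) - dseq lam ((i : ℕ) + 1) else 0) Finset.univ hfj).symm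
      _ ≤ ∑ i ∈ Finset.univ.erase j, (dseq lam (i : ℕ) - dseq lam ((i : ℕ) + 1)) := by
          apply Finset.sum_le_sum
          intro i _
          cases hpi : p.get i <;> simp [hpi]
          linarith [dseq_succ_lt hlam (i : ℕ)]
  rw [sum_tele lam p.length] at key
  linarith

omit hlam in
lemma mem_CnSet_iff {a : ℝ} {n : ℕ} :
    a ∈ CnSet lam n ↔ ∃ p : List Bool, p.length = n ∧ a ∈ Iset lam p := by
  simp [CnSet]

lemma bounds_of_mem {a : ℝ} {n : ℕ} (ha : a ∈ CnSet lam n) : 0 ≤ a ∧ a ≤ 1 := by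
  obtain ⟨p, hp, h1, h2⟩ := mem_CnSet_iff.mp ha
  refine ⟨le_trans (leftI_nonneg hlam p) h1, ?_⟩
  have h3 := leftI_le hlam p
  linarith

lemma lower_dichotomy {a : ℝ} {m : ℕ} (ha : a ∈ CnSet lam (m + 1)) :
    a ≤ dseq lam (m + 1) ∨ dseq lam m - dseq lam (m + 1) ≤ a := by
  obtain ⟨p, hp, h1, h2⟩ := mem_CnSet_iff.mp ha
  by_cases h : ∀ i : Fin p.length, p.get i = false
  · left
    have hL : leftI lam p = 0 := by
      unfold leftI
      apply Finset.sum_eq_zero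
      intro i _
      have hnt : ¬(p.get i = true) := by
        simp only [Bool.not_eq_true]
        exact h i
      rw [if_neg hnt]
    rw [hL, zero_add, hp] at h2
    exact h2
  · right
    push_neg at h
    obtain ⟨j, hj⟩ := h
    have hj' : p.get j = true := by simpa using hj
    have h3 := leftI_ge_of_true hlam p j hj'
    have h4 := key_term hlam (show (j : ℕ) < m + 1 from hp ▸ j.isLt)
    linarith

lemma upper_dichotomy {a : ℝ} {m : ℕ} (ha : a ∈ CnSet lam (m + 1)) :
    1 - dseq lam (m + 1) ≤ a ∨ a ≤ 1 - dseq lam m + dseq lam (m + 1) := by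
  obtain ⟨p, hp, h1, h2⟩ := mem_CnSet_iff.mp ha
  by_cases h : ∀ i : Fin p.length, p.get i = true
  · left
    have hL : leftI lam p = 1 - dseq lam p.length := by
      unfold leftI
      rw [show (∑ i : Fin p.length,
            if p.get i then dseq lam (i : ℕ) - dseq lam ((i : ℕ) + 1) else 0)
          = ∑ i : Fin p.length, (dseq lam (i : ℕ) - dseq lam ((i : ℕ) + 1)) from
        Finset.sum_congr rfl (fun i _ => by rw [h i]; simp)]
      exact sum_tele lam p.length
    rw [hp] at hL
    linarith
  · right
    push_neg at h
    obtain ⟨j, hj⟩ := h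
    have hj' : p.get j = false := by simpa using hj
    have h3 := leftI_le_of_false hlam p j hj'
    have h4 := key_term hlam (show (j : ℕ) < m + 1 from hp ▸ j.isLt)
    have h5 : dseq lam p.length = dseq lam (m + 1) := by rw [hp]
    linarith

end CCaux

/-- If `λₙ < 1/3` for infinitely many `n`, then `C(λ) - C(λ) ≠ [-1,1]`; moreover every
interval `[-1, -1 + w]` with `w > 0` contains a point not in `C(λ) - C(λ)`. -/
theorem CSet_sub_CSet_ne_Icc (lam : ℕ → ℝ)
    (hlam : ∀ n, 1 ≤ n → lam n ∈ Ioo (0 : ℝ) (1 / 2))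
    (hinf : {n : ℕ | 1 ≤ n ∧ lam n < 1 / 3}.Infinite) :
    CSet lam - CSet lam ≠ Icc (-1 : ℝ) 1 ∧
    ∀ w : ℝ, 0 < w → ∃ x ∈ Icc (-1 : ℝ) (-1 + w), x ∉ CSet lam - CSet lam := by
  have main2 : ∀ w : ℝ, 0 < w → ∃ x ∈ Icc (-1 : ℝ) (-1 + w), x ∉ CSet lam - CSet lam := by
    intro w hw
    obtain ⟨N, hN⟩ := exists_pow_lt_of_lt_one hw (by norm_num : (1 : ℝ) / 2 < 1)
    obtain ⟨n, hnS, hnN⟩ := hinf.exists_gt N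
    obtain ⟨hn1, hn3⟩ := hnS
    obtain ⟨m, rfl⟩ := Nat.exists_eq_succ_of_ne_zero (by omega : n ≠ 0)
    have hmN : N ≤ m := Nat.lt_succ_iff.mp hnN
    have hdm_pos := CCaux.dseq_pos hlam m
    have hdn_pos := CCaux.dseq_pos hlam (m + 1)
    have hdm_w : dseq lam m ≤ w := by
      have h1 := CCaux.dseq_le_pow hlam m
      have h2 : ((1 : ℝ) / 2) ^ m ≤ (1 / 2) ^ N :=
        pow_le_pow_of_le_one (by norm_num) (by norm_num) hmN
      linarith
    have h3d : 3 * dseq lam (m + 1) < dseq lam m := by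
      have := CCaux.dseq_succ lam m
      nlinarith [hn3, hdm_pos]
    set δ : ℝ := (dseq lam (m + 1) + dseq lam m) / 2 with hδ
    refine ⟨-1 + δ, ⟨by linarith, by linarith⟩, ?_⟩
    intro hx
    rw [Set.mem_sub] at hx
    obtain ⟨a, ha, b, hb, hab⟩ := hx
    have haC : a ∈ CnSet lam (m + 1) := Set.mem_iInter.mp ha (m + 1)
    have hbC : b ∈ CnSet lam (m + 1) := Set.mem_iInter.mp hb (m + 1)
    obtain ⟨ha0, ha1⟩ := CCaux.bounds_of_mem hlam haC
    obtain ⟨hb0, hb1⟩ := CCaux.bounds_of_mem hlam hbC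
    have hA := CCaux.lower_dichotomy hlam haC
    have hB := CCaux.upper_dichotomy hlam hbC
    rcases hA with hA | hA
    · rcases hB with hB | hB
      · linarith
      · linarith
    · linarith
  refine ⟨?_, main2⟩
  intro heq
  obtain ⟨x, hx1, hx2⟩ := main2 1 one_pos
  apply hx2
  rw [heq]
  exact ⟨hx1.1, by linarith [hx1.2]⟩
end
end
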